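/- arXiv:1912.11109 — 3 statements merged into one kernel-verified Lean document; each statement's English description precedes it below -/
import Mathlib

section
/- For all real numbers M, ν, all natural numbers k, ℓ ≥ 1, and every complex number ζ, both identities 2M·sin(πν(k+ℓ)/2)·cosh(ζ + iπνk/2) + 2M·sin(πνk/2)·cosh(ζ − iπ(1 − ν(k+ℓ)/2)) = 2M·sin(πνℓ/2)·cosh(ζ) and 2M·sin(πν(k+ℓ)/2)·sinh(ζ + iπνk/2) + 2M·sin(πνk/2)·sinh(ζ − iπ(1 − ν(k+ℓ)/2)) = 2M·sin(πνℓ/2)·sinh(ζ) hold. (This is the fusion relation (b_{k+ℓ} b_k) → b_ℓ of the Sine-Gordon model with fusion rapidities θ_(b_{k+ℓ} b_k) = πνk/2 and θ_(b_k b_{k+ℓ}) = π(1 − ν(k+ℓ)/2).) -/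
lemma sg_key (b c ζ : ℂ) :
    Complex.sin (b + c) * Complex.cosh (ζ + Complex.I * b)
      + Complex.sin b * Complex.cosh (ζ - Complex.I * ((Real.pi : ℂ) - (b + c)))
      = Complex.sin c * Complex.cosh ζ
    ∧ Complex.sin (b + c) * Complex.sinh (ζ + Complex.I * b)
      + Complex.sin b * Complex.sinh (ζ - Complex.I * ((Real.pi : ℂ) - (b + c)))
      = Complex.sin c * Complex.sinh ζ := by
  set A := Complex.exp ζ with hA
  set B := Complex.exp (b * Complex.I) with hB
  set C := Complex.exp (c * Complex.I) with hC
  set A' := Complex.exp (-ζ) with hA'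
  set B' := Complex.exp (-(b * Complex.I)) with hB'
  set C' := Complex.exp (-(c * Complex.I)) with hC'
  have rB : B * B' = 1 := by
    rw [hB, hB', ← Complex.exp_add, add_neg_cancel, Complex.exp_zero]
  have e1 : Complex.exp (-(b + c) * Complex.I) = B' * C' := by
    rw [show -(b + c) * Complex.I = -(b * Complex.I) + -(c * Complex.I) by ring,
      Complex.exp_add, hB', hC']
  have e2 : Complex.exp ((b + c) * Complex.I) = B * C := by
    rw [show (b + c) * Complex.I = b * Complex.I + c * Complex.I by ring,
      Complex.exp_add, hB, hC]
  have e3 : Complex.exp (ζ + Complex.I * b) = A * B := by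
    rw [show ζ + Complex.I * b = ζ + b * Complex.I by ring, Complex.exp_add, hA, hB]
  have e4 : Complex.exp (-(ζ + Complex.I * b)) = A' * B' := by
    rw [show -(ζ + Complex.I * b) = -ζ + -(b * Complex.I) by ring,
      Complex.exp_add, hA', hB']
  have e5 : Complex.exp (ζ - Complex.I * ((Real.pi : ℂ) - (b + c))) = -(A * B * C) := by
    rw [show ζ - Complex.I * ((Real.pi : ℂ) - (b + c))
        = (ζ + b * Complex.I + c * Complex.I) - (Real.pi : ℂ) * Complex.I by ring,
      Complex.exp_sub, Complex.exp_pi_mul_I, Complex.exp_add, Complex.exp_add, hA, hB, hC]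
    ring
  have e6 : Complex.exp (-(ζ - Complex.I * ((Real.pi : ℂ) - (b + c)))) = -(A' * B' * C') := by
    rw [show -(ζ - Complex.I * ((Real.pi : ℂ) - (b + c)))
        = (-ζ + -(b * Complex.I) + -(c * Complex.I)) + (Real.pi : ℂ) * Complex.I by ring,
      Complex.exp_add, Complex.exp_pi_mul_I, Complex.exp_add, Complex.exp_add, hA', hB', hC']
    ring
  have e7 : Complex.exp (-b * Complex.I) = B' := by
    rw [show -b * Complex.I = -(b * Complex.I) by ring, hB']
  have e8 : Complex.exp (-c * Complex.I) = C' := by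
    rw [show -c * Complex.I = -(c * Complex.I) by ring, hC']
  constructor
  · simp only [Complex.sin, Complex.cosh, e1, e2, e3, e4, e5, e6, e7, e8,
      ← hA, ← hA', ← hB, ← hB', ← hC, ← hC']
    linear_combination (Complex.I / 4) * (A + A') * (C' - C) * rB
  · simp only [Complex.sin, Complex.sinh, e1, e2, e3, e4, e5, e6, e7, e8,
      ← hA, ← hA', ← hB, ← hB', ← hC, ← hC']
    linear_combination (Complex.I / 4) * (A - A') * (C' - C) * rB

/-- Fusion relation `(b_{k+ℓ} b_k) → b_ℓ` of the Sine-Gordon model, with fusion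
rapidities `θ_(b_{k+ℓ} b_k) = πνk/2` and `θ_(b_k b_{k+ℓ}) = π(1 - ν(k+ℓ)/2)`:
the momenta of the breathers `b_{k+ℓ}` (mass `2M sin(πν(k+ℓ)/2)`) and `b_k`
(mass `2M sin(πνk/2)`) at the shifted rapidities add up to the on-shell momentum
of the breather `b_ℓ` of mass `2M sin(πνℓ/2)`. -/
theorem sineGordon_fusion_breather_breather_annihilation
    (M ν : ℝ) (k ℓ : ℕ) (hk : 1 ≤ k) (hℓ : 1 ≤ ℓ) (ζ : ℂ) :
    2 * (M : ℂ) * ((Real.sin (Real.pi * ν * (k + ℓ) / 2) : ℝ) : ℂ)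
        * Complex.cosh (ζ + Complex.I * ((Real.pi * ν * k / 2 : ℝ) : ℂ))
      + 2 * (M : ℂ) * ((Real.sin (Real.pi * ν * k / 2) : ℝ) : ℂ)
          * Complex.cosh (ζ - Complex.I * ((Real.pi * (1 - ν * (k + ℓ) / 2) : ℝ) : ℂ))
      = 2 * (M : ℂ) * ((Real.sin (Real.pi * ν * ℓ / 2) : ℝ) : ℂ) * Complex.cosh ζ
    ∧ 2 * (M : ℂ) * ((Real.sin (Real.pi * ν * (k + ℓ) / 2) : ℝ) : ℂ)
        * Complex.sinh (ζ + Complex.I * ((Real.pi * ν * k / 2 : ℝ) : ℂ))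
      + 2 * (M : ℂ) * ((Real.sin (Real.pi * ν * k / 2) : ℝ) : ℂ)
          * Complex.sinh (ζ - Complex.I * ((Real.pi * (1 - ν * (k + ℓ) / 2) : ℝ) : ℂ))
      = 2 * (M : ℂ) * ((Real.sin (Real.pi * ν * ℓ / 2) : ℝ) : ℂ) * Complex.sinh ζ := by
  have key := sg_key ((Real.pi * ν * k / 2 : ℝ) : ℂ) ((Real.pi * ν * ℓ / 2 : ℝ) : ℂ) ζ
  have h1 : ((Real.sin (Real.pi * ν * (k + ℓ) / 2) : ℝ) : ℂ)
      = Complex.sin (((Real.pi * ν * k / 2 : ℝ) : ℂ) + ((Real.pi * ν * ℓ / 2 : ℝ) : ℂ)) := by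
    rw [Complex.ofReal_sin]; congr 1; push_cast; ring
  have h2 : ((Real.sin (Real.pi * ν * k / 2) : ℝ) : ℂ)
      = Complex.sin ((Real.pi * ν * k / 2 : ℝ) : ℂ) := Complex.ofReal_sin _
  have h3 : ((Real.sin (Real.pi * ν * ℓ / 2) : ℝ) : ℂ)
      = Complex.sin ((Real.pi * ν * ℓ / 2 : ℝ) : ℂ) := Complex.ofReal_sin _
  have h4 : ((Real.pi * (1 - ν * (k + ℓ) / 2) : ℝ) : ℂ)
      = ((Real.pi : ℝ) : ℂ) - (((Real.pi * ν * k / 2 : ℝ) : ℂ) + ((Real.pi * ν * ℓ / 2 : ℝ) : ℂ)) := by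
    push_cast; ring
  rw [h1, h2, h3, h4]
  exact ⟨by linear_combination 2 * (M : ℂ) * key.1, by linear_combination 2 * (M : ℂ) * key.2⟩
end

section
/- For all real numbers a, b and every complex number ζ such that sinh(ζ + iπb) ≠ i·sin(πa), sinh(ζ − iπb) ≠ i·sin(πa), sinh ζ ≠ i·sin(π(a+b)), and sinh ζ ≠ i·sin(π(a−b)), the bootstrap identity f_a(ζ + iπb)·f_a(ζ − iπb) = f_{a+b}(ζ)·f_{a−b}(ζ) holds, where f_a(ζ) = (sinh ζ + i·sin(πa))/(sinh ζ − i·sin(πa)). (With a = ν and b = ν/2 this is the bootstrap equation for the Sine-Gordon fusion (b_1 b_1) → b_2: f_ν(ζ + iπν/2)·f_ν(ζ − iπν/2) = f_{ν/2}(ζ)·f_{3ν/2}(ζ) = S^{b1b2}(ζ).) -/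
/-!
Both `f_a(ζ + iπb) f_a(ζ - iπb)` and `f_{a+b}(ζ) f_{a-b}(ζ)` are quotients, and already their
numerators agree, as do their denominators: expanding `sinh (ζ ± iβ)` by the addition theorem,
the difference of the two numerator products is `sin² β ((cosh² ζ - sinh² ζ) - (sin² α + cos² α))`,
which vanishes; the denominators are the numerators at `-α`.
-/

open Complex

/-- `f_a(ζ)` with the angle `α = πa` as parameter. -/
noncomputable def scatteringFactor (α ζ : ℂ) : ℂ :=
  (sinh ζ + I * sin α) / (sinh ζ - I * sin α)

theorem sinh_add_mul_I_add_mul_sinh_sub_mul_I_add (α β ζ : ℂ) :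
    (sinh (ζ + I * β) + I * sin α) * (sinh (ζ - I * β) + I * sin α)
      = (sinh ζ + I * sin (α + β)) * (sinh ζ + I * sin (α - β)) := by
  rw [sinh_add, sinh_sub, sin_add, sin_sub, mul_comm I β, cosh_mul_I, sinh_mul_I]
  linear_combination
    (sin α ^ 2 - cosh ζ ^ 2 * sin β ^ 2 - sin α ^ 2 * cos β ^ 2 + cos α ^ 2 * sin β ^ 2) * I_sq
      + sin β ^ 2 * cosh_sq_sub_sinh_sq ζ - sin β ^ 2 * sin_sq_add_cos_sq α
      + (sinh ζ ^ 2 + sin α ^ 2) * sin_sq_add_cos_sq β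

theorem sinh_add_mul_I_sub_mul_sinh_sub_mul_I_sub (α β ζ : ℂ) :
    (sinh (ζ + I * β) - I * sin α) * (sinh (ζ - I * β) - I * sin α)
      = (sinh ζ - I * sin (α + β)) * (sinh ζ - I * sin (α - β)) := by
  have h := sinh_add_mul_I_add_mul_sinh_sub_mul_I_add (-α) β ζ
  simp only [sin_add, sin_sub, sin_neg, cos_neg] at h
  rw [sin_add, sin_sub]
  linear_combination h

theorem scatteringFactor_bootstrap (α β ζ : ℂ) :
    scatteringFactor α (ζ + I * β) * scatteringFactor α (ζ - I * β)
      = scatteringFactor (α + β) ζ * scatteringFactor (α - β) ζ := by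
  simp only [scatteringFactor, div_mul_div_comm]
  rw [sinh_add_mul_I_add_mul_sinh_sub_mul_I_add, sinh_add_mul_I_sub_mul_sinh_sub_mul_I_sub,
    mul_comm (sinh ζ - _)]

theorem sineGordon_bootstrap_general (a b : ℝ) (ζ : ℂ) :
    ((Complex.sinh (ζ + Complex.I * ((Real.pi * b : ℝ) : ℂ))
          + Complex.I * ((Real.sin (Real.pi * a) : ℝ) : ℂ))
        / (Complex.sinh (ζ + Complex.I * ((Real.pi * b : ℝ) : ℂ))
          - Complex.I * ((Real.sin (Real.pi * a) : ℝ) : ℂ)))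
      * ((Complex.sinh (ζ - Complex.I * ((Real.pi * b : ℝ) : ℂ))
          + Complex.I * ((Real.sin (Real.pi * a) : ℝ) : ℂ))
        / (Complex.sinh (ζ - Complex.I * ((Real.pi * b : ℝ) : ℂ))
          - Complex.I * ((Real.sin (Real.pi * a) : ℝ) : ℂ)))
    = ((Complex.sinh ζ + Complex.I * ((Real.sin (Real.pi * (a + b)) : ℝ) : ℂ))
        / (Complex.sinh ζ - Complex.I * ((Real.sin (Real.pi * (a + b)) : ℝ) : ℂ)))
      * ((Complex.sinh ζ + Complex.I * ((Real.sin (Real.pi * (a - b)) : ℝ) : ℂ))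
        / (Complex.sinh ζ - Complex.I * ((Real.sin (Real.pi * (a - b)) : ℝ) : ℂ))) := by
  simpa only [scatteringFactor, ofReal_sin, ofReal_mul, ofReal_add, ofReal_sub, mul_add, mul_sub]
    using scatteringFactor_bootstrap (Real.pi * a) (Real.pi * b) ζ

/-- Bootstrap identity `f_a(ζ + iπb) · f_a(ζ - iπb) = f_{a+b}(ζ) · f_{a-b}(ζ)` for
`f_a(ζ) = (sinh ζ + i sin(πa)) / (sinh ζ - i sin(πa))`, away from the poles of both
sides. With `a = ν`, `b = ν/2` this is the bootstrap equation for the Sine-Gordon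
fusion `(b_1 b_1) → b_2`. -/
theorem sineGordon_bootstrap (a b : ℝ) (ζ : ℂ)
    (h₁ : Complex.sinh (ζ + Complex.I * ((Real.pi * b : ℝ) : ℂ))
      ≠ Complex.I * ((Real.sin (Real.pi * a) : ℝ) : ℂ))
    (h₂ : Complex.sinh (ζ - Complex.I * ((Real.pi * b : ℝ) : ℂ))
      ≠ Complex.I * ((Real.sin (Real.pi * a) : ℝ) : ℂ))
    (h₃ : Complex.sinh ζ ≠ Complex.I * ((Real.sin (Real.pi * (a + b)) : ℝ) : ℂ))
    (h₄ : Complex.sinh ζ ≠ Complex.I * ((Real.sin (Real.pi * (a - b)) : ℝ) : ℂ)) :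
    ((Complex.sinh (ζ + Complex.I * ((Real.pi * b : ℝ) : ℂ))
          + Complex.I * ((Real.sin (Real.pi * a) : ℝ) : ℂ))
        / (Complex.sinh (ζ + Complex.I * ((Real.pi * b : ℝ) : ℂ))
          - Complex.I * ((Real.sin (Real.pi * a) : ℝ) : ℂ)))
      * ((Complex.sinh (ζ - Complex.I * ((Real.pi * b : ℝ) : ℂ))
          + Complex.I * ((Real.sin (Real.pi * a) : ℝ) : ℂ))
        / (Complex.sinh (ζ - Complex.I * ((Real.pi * b : ℝ) : ℂ))
          - Complex.I * ((Real.sin (Real.pi * a) : ℝ) : ℂ)))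
    = ((Complex.sinh ζ + Complex.I * ((Real.sin (Real.pi * (a + b)) : ℝ) : ℂ))
        / (Complex.sinh ζ - Complex.I * ((Real.sin (Real.pi * (a + b)) : ℝ) : ℂ)))
      * ((Complex.sinh ζ + Complex.I * ((Real.sin (Real.pi * (a - b)) : ℝ) : ℂ))
        / (Complex.sinh ζ - Complex.I * ((Real.sin (Real.pi * (a - b)) : ℝ) : ℂ))) :=
  sineGordon_bootstrap_general a b ζ
end

section
/- Let ν ∈ (2/3, 4/5). Then the function ζ ↦ (ζ − iπ(1−ν/2))·f_{ν/2}(ζ)·f_{3ν/2}(ζ) tends to 2i·tan(πν) as ζ → iπ(1−ν/2) (along ζ ≠ iπ(1−ν/2)); i.e., the Sine-Gordon component S^{b1b2} = f_{ν/2}·f_{3ν/2} has a simple pole at the s-channel point iπ(1−ν/2) with residue 2i·tan(πν), which lies in −iℝ₊ since tan(πν) < 0 for ν in this range. -/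
open Complex Filter Real

private lemma sg_aux (c s S C : ℂ) (hc : c ≠ 0) (hs : s ≠ 0) (hC : C ≠ 0) :
    (-c)⁻¹ * ((Complex.I * s + Complex.I * s) *
      ((Complex.I * (2 * S * c)) / (Complex.I * (-2 * C * s)))) = 2 * Complex.I * (S / C) := by
  rw [mul_div_mul_left _ _ Complex.I_ne_zero]
  field_simp
  ring

/-- For `ν ∈ (2/3, 4/5)`, the function `ζ ↦ (ζ - iπ(1-ν/2)) f_{ν/2}(ζ) f_{3ν/2}(ζ)`
tends to `2i tan(πν)` as `ζ → iπ(1-ν/2)` (along `ζ ≠ iπ(1-ν/2)`): the Sine-Gordon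
component `S^{b1b2} = f_{ν/2} · f_{3ν/2}` has a simple pole at the s-channel point
`iπ(1-ν/2)` with residue `2i tan(πν)`, which lies in `-iℝ₊` since `tan(πν) < 0`
for `ν` in this range. -/
theorem sineGordon_b1b2_residue_s_channel (ν : ℝ) (h₁ : 2 / 3 < ν) (h₂ : ν < 4 / 5) :
    Filter.Tendsto
      (fun ζ : ℂ => (ζ - Complex.I * ((Real.pi * (1 - ν / 2) : ℝ) : ℂ))
        * ((Complex.sinh ζ + Complex.I * ((Real.sin (Real.pi * ν / 2) : ℝ) : ℂ))
          / (Complex.sinh ζ - Complex.I * ((Real.sin (Real.pi * ν / 2) : ℝ) : ℂ)))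
        * ((Complex.sinh ζ + Complex.I * ((Real.sin (3 * Real.pi * ν / 2) : ℝ) : ℂ))
          / (Complex.sinh ζ - Complex.I * ((Real.sin (3 * Real.pi * ν / 2) : ℝ) : ℂ))))
      (nhdsWithin (Complex.I * ((Real.pi * (1 - ν / 2) : ℝ) : ℂ))
        {Complex.I * ((Real.pi * (1 - ν / 2) : ℝ) : ℂ)}ᶜ)
      (nhds (2 * Complex.I * ((Real.tan (Real.pi * ν) : ℝ) : ℂ)))
    ∧ ∃ t : ℝ, 0 < t ∧
        2 * Complex.I * ((Real.tan (Real.pi * ν) : ℝ) : ℂ) = -(Complex.I * (t : ℂ)) := by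
  have pi_pos := Real.pi_pos
  set θ : ℝ := Real.pi * (1 - ν / 2) with hθ
  set z₀ : ℂ := Complex.I * (θ : ℂ) with hz₀
  set s₁ : ℝ := Real.sin (Real.pi * ν / 2) with hs₁
  set s₂ : ℝ := Real.sin (3 * Real.pi * ν / 2) with hs₂
  set c : ℝ := Real.cos (Real.pi * ν / 2) with hc
  -- key real trig facts
  have hsinθ : Real.sin θ = s₁ := by
    rw [hθ, hs₁]
    rw [show Real.pi * (1 - ν / 2) = Real.pi - Real.pi * ν / 2 by ring, Real.sin_pi_sub]
  have hcosθ : Real.cos θ = -c := by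
    rw [hθ, hc]
    rw [show Real.pi * (1 - ν / 2) = Real.pi - Real.pi * ν / 2 by ring, Real.cos_pi_sub]
  -- positivity facts
  have hs₁pos : 0 < s₁ := Real.sin_pos_of_pos_of_lt_pi (by nlinarith) (by nlinarith)
  have hcpos : 0 < c := Real.cos_pos_of_mem_Ioo ⟨by nlinarith, by nlinarith⟩
  have hs₂neg : s₂ < 0 := by
    have : s₂ = -Real.sin (3 * Real.pi * ν / 2 - Real.pi) := by
      rw [hs₂, ← Real.sin_add_pi (3 * Real.pi * ν / 2 - Real.pi)]; ring_nf
    rw [this, neg_lt_zero]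
    exact Real.sin_pos_of_pos_of_lt_pi (by nlinarith) (by nlinarith)
  have hcosν : Real.cos (Real.pi * ν) < 0 :=
    Real.cos_neg_of_pi_div_two_lt_of_lt (by nlinarith) (by nlinarith)
  have hsinν : 0 < Real.sin (Real.pi * ν) :=
    Real.sin_pos_of_pos_of_lt_pi (by nlinarith) (by nlinarith)
  have htan : Real.tan (Real.pi * ν) < 0 := by
    rw [Real.tan_eq_sin_div_cos]
    exact div_neg_of_pos_of_neg hsinν hcosν
  -- complex values at z₀
  have hsinh0 : Complex.sinh z₀ = Complex.I * (s₁ : ℂ) := by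
    rw [hz₀, mul_comm Complex.I, Complex.sinh_mul_I, ← Complex.ofReal_sin, hsinθ, mul_comm]
  have hcosh0 : Complex.cosh z₀ = (-c : ℝ) := by
    rw [hz₀, mul_comm Complex.I, Complex.cosh_mul_I, ← Complex.ofReal_cos, hcosθ]
  have hcosh0ne : Complex.cosh z₀ ≠ 0 := by
    rw [hcosh0]
    exact_mod_cast neg_ne_zero.mpr (ne_of_gt hcpos)
  have hdenne : Complex.sinh z₀ - Complex.I * (s₂ : ℂ) ≠ 0 := by
    rw [hsinh0, ← mul_sub]
    apply mul_ne_zero Complex.I_ne_zero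
    rw [← Complex.ofReal_sub]
    exact_mod_cast ne_of_gt (by linarith : (0:ℝ) < s₁ - s₂)
  constructor
  · -- the limit
    -- Part A : (ζ - z₀)/(sinh ζ - I s₁) → (cosh z₀)⁻¹
    have hA : Tendsto (fun ζ : ℂ => (ζ - z₀) / (Complex.sinh ζ - Complex.I * (s₁ : ℂ)))
        (nhdsWithin z₀ {z₀}ᶜ) (nhds (Complex.cosh z₀)⁻¹) := by
      have hslope := hasDerivAt_iff_tendsto_slope.mp (Complex.hasDerivAt_sinh z₀)
      have := hslope.inv₀ hcosh0ne
      refine this.congr fun ζ => ?_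
      rw [slope_def_field, div_eq_mul_inv, mul_inv, inv_inv, hsinh0]
      ring
    -- Part B : continuity of the rest
    have hB : Tendsto (fun ζ : ℂ => (Complex.sinh ζ + Complex.I * (s₁ : ℂ)) *
          ((Complex.sinh ζ + Complex.I * (s₂ : ℂ)) / (Complex.sinh ζ - Complex.I * (s₂ : ℂ))))
        (nhdsWithin z₀ {z₀}ᶜ)
        (nhds ((Complex.sinh z₀ + Complex.I * (s₁ : ℂ)) *
          ((Complex.sinh z₀ + Complex.I * (s₂ : ℂ)) / (Complex.sinh z₀ - Complex.I * (s₂ : ℂ))))) := by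
      apply Filter.Tendsto.mono_left _ nhdsWithin_le_nhds
      exact (Complex.continuous_sinh.continuousAt.add continuousAt_const).mul
        ((Complex.continuous_sinh.continuousAt.add continuousAt_const).div
          (Complex.continuous_sinh.continuousAt.sub continuousAt_const) hdenne)
    have hAB := hA.mul hB
    -- identify the limit value
    have hval : (Complex.cosh z₀)⁻¹ * ((Complex.sinh z₀ + Complex.I * (s₁ : ℂ)) *
          ((Complex.sinh z₀ + Complex.I * (s₂ : ℂ)) / (Complex.sinh z₀ - Complex.I * (s₂ : ℂ))))
        = 2 * Complex.I * ((Real.tan (Real.pi * ν) : ℝ) : ℂ) := by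
      rw [hsinh0, hcosh0]
      have hd : Complex.I * (s₁ : ℂ) - Complex.I * (s₂ : ℂ) = Complex.I * ((s₁ - s₂ : ℝ) : ℂ) := by
        push_cast; ring
      -- trig identities
      have pyth : s₁ ^ 2 + c ^ 2 = 1 := by
        rw [hs₁, hc]; exact Real.sin_sq_add_cos_sq _
      have hsin2 : Real.sin (Real.pi * ν) = 2 * s₁ * c := by
        rw [show Real.pi * ν = Real.pi * ν / 2 + Real.pi * ν / 2 by ring, Real.sin_add,
          hs₁, hc]; ring
      have hcos2 : Real.cos (Real.pi * ν) = c ^ 2 - s₁ ^ 2 := by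
        rw [show Real.pi * ν = Real.pi * ν / 2 + Real.pi * ν / 2 by ring, Real.cos_add,
          hs₁, hc]; ring
      have hs2eq : s₂ = Real.sin (Real.pi * ν) * c + Real.cos (Real.pi * ν) * s₁ := by
        rw [hs₂, show 3 * Real.pi * ν / 2 = Real.pi * ν + Real.pi * ν / 2 by ring,
          Real.sin_add, hs₁, hc]
      have hsum : s₁ + s₂ = 2 * Real.sin (Real.pi * ν) * c := by
        rw [hs2eq, hsin2, hcos2]; linear_combination (-s₁) * pyth
      have hdiff : s₁ - s₂ = -2 * Real.cos (Real.pi * ν) * s₁ := by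
        rw [hs2eq, hsin2, hcos2]; linear_combination (-s₁) * pyth
      have htaneq : Real.tan (Real.pi * ν) = Real.sin (Real.pi * ν) / Real.cos (Real.pi * ν) :=
        Real.tan_eq_sin_div_cos _
      have hcne : (c : ℂ) ≠ 0 := by exact_mod_cast ne_of_gt hcpos
      have hs₁ne : (s₁ : ℂ) ≠ 0 := by exact_mod_cast ne_of_gt hs₁pos
      have hcosνne : ((Real.cos (Real.pi * ν) : ℝ) : ℂ) ≠ 0 := by
        exact_mod_cast ne_of_lt hcosν
      have hdne : ((s₁ - s₂ : ℝ) : ℂ) ≠ 0 := by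
        exact_mod_cast ne_of_gt (by linarith : (0:ℝ) < s₁ - s₂)
      have hsum' : ((s₁ : ℂ) + s₂) = 2 * ((Real.sin (Real.pi * ν) : ℝ) : ℂ) * (c : ℂ) := by
        exact_mod_cast congrArg (Complex.ofReal) hsum
      have hdiff' : ((s₁ : ℂ) - s₂) = -2 * ((Real.cos (Real.pi * ν) : ℝ) : ℂ) * (s₁ : ℂ) := by
        exact_mod_cast congrArg (Complex.ofReal) hdiff
      have htan' : ((Real.tan (Real.pi * ν) : ℝ) : ℂ)
          = ((Real.sin (Real.pi * ν) : ℝ) : ℂ) / ((Real.cos (Real.pi * ν) : ℝ) : ℂ) := by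
        rw [htaneq]; push_cast; ring
      have e1 : Complex.I * (s₁ : ℂ) + Complex.I * (s₂ : ℂ)
          = Complex.I * (2 * ((Real.sin (Real.pi * ν) : ℝ) : ℂ) * (c : ℂ)) := by
        rw [show Complex.I * (s₁:ℂ) + Complex.I * (s₂:ℂ) = Complex.I * ((s₁:ℂ) + s₂) by ring,
          hsum']
      have e2 : Complex.I * (s₁ : ℂ) - Complex.I * (s₂ : ℂ)
          = Complex.I * (-2 * ((Real.cos (Real.pi * ν) : ℝ) : ℂ) * (s₁ : ℂ)) := by
        rw [show Complex.I * (s₁:ℂ) - Complex.I * (s₂:ℂ) = Complex.I * ((s₁:ℂ) - s₂) by ring,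
          hdiff']
      rw [htan', e1, e2, Complex.ofReal_neg]
      exact sg_aux _ _ _ _ hcne hs₁ne hcosνne
    rw [← hval]
    refine hAB.congr fun ζ => ?_
    field_simp
  · -- negativity of the residue along iℝ₊
    refine ⟨-2 * Real.tan (Real.pi * ν), by linarith, ?_⟩
    push_cast
    ring
end
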